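/- arXiv:1807.02694 — 5 statements merged into one kernel-verified Lean document; each statement's English description precedes it below -/
import Mathlib

section
/- Let f : ℝ → ℝ be convex with a zero-order singularity at z (i.e. the left derivative f'₋(z) and right derivative f'₊(z) exist and differ), and let φ be a smooth, symmetric, nonnegative kernel with compact support [-C, C], ∫φ = 1, and φ(0) > 0. Define f_h(z) = (1/h)∫ f(u)φ((z-u)/h)du. Then the derivative of f_h at z satisfies lim_{h→0} f_h'(z) = (f'₋(z) + f'₊(z))/2. -/
open MeasureTheory

open Set Filter

/-- at a zero-order singularity `z` of a convex function `f`, the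
derivative of the kernel-smoothed `f_h` at `z` converges, as `h → 0⁺`, to the
average of the left and right derivatives of `f` at `z`. -/
theorem stmt2 (f φ : ℝ → ℝ) (C z fl fr : ℝ) (hC : 0 < C)
    (hconv : ConvexOn ℝ Set.univ f)
    (hdiff : DifferentiableOn ℝ f {z}ᶜ)
    (hfl : HasDerivWithinAt f fl (Set.Iic z) z)
    (hfr : HasDerivWithinAt f fr (Set.Ici z) z)
    (hsing : fl ≠ fr)
    (hφsm : ContDiff ℝ (⊤ : ℕ∞) φ)
    (hφsym : ∀ w, φ (-w) = φ w)
    (hφpos : ∀ w, 0 ≤ φ w)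
    (hφ0 : 0 < φ 0)
    (hφsupp : ∀ w, C < |w| → φ w = 0)
    (hφ1 : ∫ w, φ w = 1) :
    Filter.Tendsto
      (fun h : ℝ => deriv (fun t : ℝ => (1 / h) * ∫ u, f u * φ ((t - u) / h)) z)
      (nhdsWithin 0 (Set.Ioi 0)) (nhds ((fl + fr) / 2)) := by
  classical
  have hcontf : Continuous f := hconv.locallyLipschitz.continuous
  have hφc : Continuous φ := hφsm.continuous
  have hφcs : HasCompactSupport φ := by
    apply HasCompactSupport.intro (isCompact_Icc (a := -C) (b := C))
    intro x hx
    apply hφsupp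
    simp only [Set.mem_Icc, not_and_or, not_le] at hx
    rcases hx with h | h
    · rw [abs_of_neg (by linarith)]; linarith
    · rw [abs_of_pos (by linarith)]; exact h
  have hφint : Integrable φ := hφc.integrable_of_hasCompactSupport hφcs
  have hdiffat : ∀ x : ℝ, x ≠ z → DifferentiableAt ℝ f x := fun x hx =>
    (hdiff x hx).differentiableAt (isOpen_compl_singleton.mem_nhds hx)
  -- slope vs derivative inequalities
  have lem_le : ∀ a x : ℝ, a < x → x ≠ z → slope f a x ≤ deriv f x := fun a x hax hxz =>
    hconv.slope_le_deriv (mem_univ a) (mem_univ x) hax (hdiffat x hxz)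
  have lem_ge : ∀ x b : ℝ, x < b → x ≠ z → deriv f x ≤ slope f x b := fun x b hxb hxz =>
    hconv.deriv_le_slope (mem_univ x) (mem_univ b) hxb (hdiffat x hxz)
  -- bounds on slopes over intervals
  have slope_bound : ∀ a0 b0 p q : ℝ, a0 ≠ z → b0 ≠ z → a0 < p → p < q → q < b0 →
      deriv f a0 ≤ slope f p q ∧ slope f p q ≤ deriv f b0 := by
    intro a0 b0 p q ha hb hap hpq hqb
    have mono_p := hconv.slope_mono (mem_univ p)
    have mono_q := hconv.slope_mono (mem_univ q)
    constructor
    · have h1 : deriv f a0 ≤ slope f a0 p := lem_ge a0 p hap ha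
      have h2 : slope f p a0 ≤ slope f p q :=
        mono_p ⟨mem_univ _, by simpa using hap.ne⟩ ⟨mem_univ _, by simpa using hpq.ne'⟩
          (le_of_lt (hap.trans hpq))
      calc deriv f a0 ≤ slope f a0 p := h1
        _ = slope f p a0 := slope_comm f a0 p
        _ ≤ slope f p q := h2
    · have h1 : slope f q b0 ≤ deriv f b0 := lem_le q b0 hqb hb
      have h2 : slope f q p ≤ slope f q b0 :=
        mono_q ⟨mem_univ _, by simpa using hpq.ne⟩ ⟨mem_univ _, by simpa using hqb.ne'⟩
          (le_of_lt (hpq.trans hqb))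
      calc slope f p q = slope f q p := slope_comm f p q
        _ ≤ slope f q b0 := h2
        _ ≤ deriv f b0 := h1
  -- derivative bound on a compact interval
  set M : ℝ := max |deriv f (z - (C + 1))| |deriv f (z + (C + 1))| with hM
  have hM0 : 0 ≤ M := le_trans (abs_nonneg _) (le_max_left _ _)
  have deriv_bound : ∀ x, x ∈ Icc (z - C) (z + C) → x ≠ z → |deriv f x| ≤ M := by
    intro x hx hxz
    obtain ⟨hx1, hx2⟩ := hx
    have ha : z - (C + 1) ≠ z := by intro h; nlinarith [sub_eq_self.mp h]
    have hb : z + (C + 1) ≠ z := by intro h; nlinarith [add_eq_left.mp h]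
    have hax : z - (C + 1) < x := by linarith
    have hxb : x < z + (C + 1) := by linarith
    have h1 : deriv f (z - (C + 1)) ≤ deriv f x :=
      le_trans (lem_ge _ x hax ha) (lem_le _ x hax hxz)
    have h2 : deriv f x ≤ deriv f (z + (C + 1)) :=
      le_trans (lem_ge x _ hxb hxz) (lem_le x _ hxb hb)
    rw [abs_le]
    constructor
    · have := neg_abs_le (deriv f (z - (C + 1)))
      have := le_max_left |deriv f (z - (C + 1))| |deriv f (z + (C + 1))|
      linarith
    · have := le_abs_self (deriv f (z + (C + 1)))
      have := le_max_right |deriv f (z - (C + 1))| |deriv f (z + (C + 1))|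
      linarith
  -- one-sided limits of slopes at z
  have slopeL : Tendsto (slope f z) (nhdsWithin z (Iio z)) (nhds fl) := by
    have := hasDerivWithinAt_iff_tendsto_slope.mp hfl
    rwa [Iic_diff_right] at this
  have slopeR : Tendsto (slope f z) (nhdsWithin z (Ioi z)) (nhds fr) := by
    have := hasDerivWithinAt_iff_tendsto_slope.mp hfr
    rwa [Ici_sdiff_left] at this
  have mapL : Tendsto (fun x : ℝ => 2 * x - z) (nhdsWithin z (Iio z)) (nhdsWithin z (Iio z)) := by
    rw [tendsto_nhdsWithin_iff]
    constructor
    · have h1 : Tendsto (fun x : ℝ => 2 * x - z) (nhds z) (nhds (2 * z - z)) :=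
        ((continuous_const.mul continuous_id).sub continuous_const).tendsto z
      have h2 : 2 * z - z = z := by ring
      rw [h2] at h1
      exact h1.mono_left nhdsWithin_le_nhds
    · filter_upwards [self_mem_nhdsWithin] with x hx
      simp only [mem_Iio] at hx ⊢; linarith
  have mapR : Tendsto (fun x : ℝ => 2 * x - z) (nhdsWithin z (Ioi z)) (nhdsWithin z (Ioi z)) := by
    rw [tendsto_nhdsWithin_iff]
    constructor
    · have h1 : Tendsto (fun x : ℝ => 2 * x - z) (nhds z) (nhds (2 * z - z)) :=
        ((continuous_const.mul continuous_id).sub continuous_const).tendsto z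
      have h2 : 2 * z - z = z := by ring
      rw [h2] at h1
      exact h1.mono_left nhdsWithin_le_nhds
    · filter_upwards [self_mem_nhdsWithin] with x hx
      simp only [mem_Ioi] at hx ⊢; linarith
  -- limits of deriv f from the left and right at z
  have limL : Tendsto (deriv f) (nhdsWithin z (Iio z)) (nhds fl) := by
    have hup : ∀ᶠ x in nhdsWithin z (Iio z), deriv f x ≤ slope f z x := by
      filter_upwards [self_mem_nhdsWithin] with x hx
      simp only [mem_Iio] at hx
      calc deriv f x ≤ slope f x z := lem_ge x z hx (ne_of_lt hx)
        _ = slope f z x := slope_comm f x z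
    have hlo : ∀ᶠ x in nhdsWithin z (Iio z),
        2 * slope f z (2 * x - z) - slope f z x ≤ deriv f x := by
      filter_upwards [self_mem_nhdsWithin] with x hx
      simp only [mem_Iio] at hx
      have hax : 2 * x - z < x := by linarith
      have h1 : slope f (2 * x - z) x ≤ deriv f x := lem_le _ x hax (ne_of_lt hx)
      have heq : slope f (2 * x - z) x = 2 * slope f z (2 * x - z) - slope f z x := by
        rw [slope_def_field, slope_def_field, slope_def_field]
        have d1 : x - (2 * x - z) ≠ 0 := by intro hcon; linarith
        have d2 : 2 * x - z - z ≠ 0 := by intro hcon; linarith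
        have d3 : x - z ≠ 0 := by intro hcon; linarith
        field_simp
        ring
      rw [heq] at h1
      exact h1
    have hlim_lo : Tendsto (fun x => 2 * slope f z (2 * x - z) - slope f z x)
        (nhdsWithin z (Iio z)) (nhds (2 * fl - fl)) :=
      ((slopeL.comp mapL).const_mul 2).sub slopeL
    have h2 : 2 * fl - fl = fl := by ring
    rw [h2] at hlim_lo
    exact tendsto_of_tendsto_of_tendsto_of_le_of_le' hlim_lo slopeL hlo hup
  have limR : Tendsto (deriv f) (nhdsWithin z (Ioi z)) (nhds fr) := by
    have hlo : ∀ᶠ x in nhdsWithin z (Ioi z), slope f z x ≤ deriv f x := by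
      filter_upwards [self_mem_nhdsWithin] with x hx
      simp only [mem_Ioi] at hx
      exact lem_le z x hx (ne_of_gt hx)
    have hup : ∀ᶠ x in nhdsWithin z (Ioi z),
        deriv f x ≤ 2 * slope f z (2 * x - z) - slope f z x := by
      filter_upwards [self_mem_nhdsWithin] with x hx
      simp only [mem_Ioi] at hx
      have hxb : x < 2 * x - z := by linarith
      have h1 : deriv f x ≤ slope f x (2 * x - z) := lem_ge x _ hxb (ne_of_gt hx)
      have heq : slope f x (2 * x - z) = 2 * slope f z (2 * x - z) - slope f z x := by
        rw [slope_def_field, slope_def_field, slope_def_field]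
        have d1 : 2 * x - z - x ≠ 0 := by intro hcon; linarith
        have d2 : 2 * x - z - z ≠ 0 := by intro hcon; linarith
        have d3 : x - z ≠ 0 := by intro hcon; linarith
        field_simp
        ring
      rw [heq] at h1
      exact h1
    have hlim_up : Tendsto (fun x => 2 * slope f z (2 * x - z) - slope f z x)
        (nhdsWithin z (Ioi z)) (nhds (2 * fr - fr)) :=
      ((slopeR.comp mapR).const_mul 2).sub slopeR
    have h2 : 2 * fr - fr = fr := by ring
    rw [h2] at hlim_up
    exact tendsto_of_tendsto_of_tendsto_of_le_of_le' slopeR hlim_up hlo hup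
  -- a.e. nonzero
  have hae : ∀ᵐ w : ℝ, w ≠ (0 : ℝ) := by
    rw [ae_iff]
    simpa using measure_singleton (0 : ℝ)
  -- the derivative formula for fixed h > 0
  have deriv_formula : ∀ h : ℝ, 0 < h →
      deriv (fun t : ℝ => (1 / h) * ∫ u, f u * φ ((t - u) / h)) z
        = ∫ w, deriv f (z - h * w) * φ w := by
    intro h hh
    have hne : h ≠ 0 := ne_of_gt hh
    have cov : ∀ t : ℝ, (1 / h) * ∫ u, f u * φ ((t - u) / h) = ∫ w, f (t - h * w) * φ w := by
      intro t
      have e1 : ∫ u, f u * φ ((t - u) / h) = ∫ v, f (t - v) * φ (v / h) := by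
        have e := integral_sub_left_eq_self (fun v => f (t - v) * φ (v / h)) volume t
        rw [← e]
        congr 1
        funext u
        rw [sub_sub_cancel]
      have e2 : (∫ w, f (t - h * w) * φ w) = |h⁻¹| • ∫ v, f (t - v) * φ (v / h) := by
        have e := Measure.integral_comp_mul_left (fun v => f (t - v) * φ (v / h)) h
        rw [← e]
        congr 1
        funext w
        rw [mul_div_cancel_left₀ _ hne]
      have e3 : (∫ v, f (t - v) * φ (v / h)) = h * ∫ w, f (t - h * w) * φ w := by
        rw [e2, abs_inv, abs_of_pos hh, smul_eq_mul]
        field_simp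
      rw [e1, e3]
      field_simp
    have funeq : (fun t : ℝ => (1 / h) * ∫ u, f u * φ ((t - u) / h))
        = fun t : ℝ => ∫ w, f (t - h * w) * φ w := funext cov
    rw [funeq]
    -- Lipschitz constant for f near z
    set K : ℝ := max |deriv f (z - (2 + h * C))| |deriv f (z + (2 + h * C))| with hK
    have hK0 : 0 ≤ K := le_trans (abs_nonneg _) (le_max_left _ _)
    have hhC : 0 ≤ h * C := by positivity
    have ha0 : z - (2 + h * C) ≠ z := by intro hcon; nlinarith [sub_eq_self.mp hcon]
    have hb0 : z + (2 + h * C) ≠ z := by intro hcon; nlinarith [add_eq_left.mp hcon]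
    have hlipf : ∀ p q : ℝ, z - (1 + h * C) ≤ p → p ≤ q → q ≤ z + (1 + h * C) →
        |f q - f p| ≤ K * (q - p) := by
      intro p q hp hpq hq
      rcases eq_or_lt_of_le hpq with rfl | hpq'
      · simp
      · obtain ⟨hb1, hb2⟩ := slope_bound (z - (2 + h * C)) (z + (2 + h * C)) p q ha0 hb0
          (by linarith) hpq' (by linarith)
        have heq : f q - f p = slope f p q * (q - p) := by
          rw [slope_def_field]
          exact (div_mul_cancel₀ _ (sub_ne_zero.mpr hpq'.ne')).symm
        rw [heq, abs_mul, abs_of_pos (sub_pos.mpr hpq')]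
        apply mul_le_mul_of_nonneg_right _ (by linarith)
        rw [abs_le]
        constructor
        · have := neg_abs_le (deriv f (z - (2 + h * C)))
          have := le_max_left |deriv f (z - (2 + h * C))| |deriv f (z + (2 + h * C))|
          linarith
        · have := le_abs_self (deriv f (z + (2 + h * C)))
          have := le_max_right |deriv f (z - (2 + h * C))| |deriv f (z + (2 + h * C))|
          linarith
    have hlip2 : ∀ p q : ℝ, z - (1 + h * C) ≤ p → p ≤ z + (1 + h * C) →
        z - (1 + h * C) ≤ q → q ≤ z + (1 + h * C) → |f p - f q| ≤ K * |p - q| := by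
      intro p q hp1 hp2 hq1 hq2
      rcases le_total p q with hle | hle
      · rw [abs_sub_comm (f p) (f q), abs_sub_comm p q, abs_of_nonneg (sub_nonneg.mpr hle)]
        exact hlipf p q hp1 hle hq2
      · rw [abs_of_nonneg (sub_nonneg.mpr hle)]
        exact hlipf q p hq1 hle hp2
    have key := hasDerivAt_integral_of_dominated_loc_of_lip (μ := volume) (x₀ := z)
      (F := fun t w => f (t - h * w) * φ w) (F' := fun w => deriv f (z - h * w) * φ w)
      (bound := fun w => K * φ w) (s := Metric.ball z 1) (Metric.ball_mem_nhds z one_pos)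
      (Eventually.of_forall fun t =>
        ((hcontf.comp (continuous_const.sub (continuous_const.mul continuous_id))).mul
          hφc).aestronglyMeasurable)
      (by
        apply Continuous.integrable_of_hasCompactSupport
        · exact (hcontf.comp (continuous_const.sub (continuous_const.mul continuous_id))).mul hφc
        · exact HasCompactSupport.mul_left hφcs)
      (by
        apply Measurable.aestronglyMeasurable
        exact ((measurable_deriv f).comp
          (measurable_const.sub (measurable_const.mul measurable_id))).mul hφc.measurable)
      (by
        apply Eventually.of_forall
        intro w
        by_cases hw : |w| ≤ C
        · apply LipschitzOnWith.of_dist_le_mul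
          intro x hx y hy
          rw [Real.dist_eq, Real.dist_eq, Real.coe_nnabs]
          have hxz : |x - z| < 1 := by rwa [Metric.mem_ball, Real.dist_eq] at hx
          have hyz : |y - z| < 1 := by rwa [Metric.mem_ball, Real.dist_eq] at hy
          have hhw : |h * w| ≤ h * C := by
            rw [abs_mul, abs_of_pos hh]
            exact mul_le_mul_of_nonneg_left hw hh.le
          obtain ⟨hx1, hx2⟩ := abs_lt.mp hxz
          obtain ⟨hy1, hy2⟩ := abs_lt.mp hyz
          obtain ⟨hw1, hw2⟩ := abs_le.mp hhw
          have hb := hlip2 (x - h * w) (y - h * w) (by linarith) (by linarith)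
            (by linarith) (by linarith)
          have heq2 : x - h * w - (y - h * w) = x - y := by ring
          rw [heq2] at hb
          calc |f (x - h * w) * φ w - f (y - h * w) * φ w|
              = |f (x - h * w) - f (y - h * w)| * |φ w| := by rw [← sub_mul, abs_mul]
            _ ≤ (K * |x - y|) * |φ w| :=
                mul_le_mul_of_nonneg_right hb (abs_nonneg _)
            _ = (K * |φ w|) * |x - y| := by ring
            _ ≤ |K * φ w| * |x - y| := by
                rw [abs_mul]
                apply mul_le_mul_of_nonneg_right _ (abs_nonneg _)
                exact mul_le_mul_of_nonneg_right (le_abs_self K) (abs_nonneg _)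
        · have hzero : φ w = 0 := hφsupp w (not_le.mp hw)
          apply LipschitzOnWith.of_dist_le_mul
          intro x hx y hy
          simp only [hzero, mul_zero, dist_self]
          positivity)
      (hφint.const_mul K)
      (by
        filter_upwards [hae] with w hw
        have hne2 : z - h * w ≠ z := by
          intro hcon
          exact hw ((mul_eq_zero.mp (sub_eq_self.mp hcon)).resolve_left hne)
        have hd := (hdiffat _ hne2).hasDerivAt
        have comp : HasDerivAt (fun t => f (t - h * w)) (deriv f (z - h * w)) z := by
          have hc := hd.comp z ((hasDerivAt_id z).sub_const (h * w))
          exact HasDerivAt.comp_sub_const z (h * w) hd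
        exact comp.mul_const (φ w))
    exact key.2.deriv
  -- the main convergence
  have main : Tendsto (fun h : ℝ => ∫ w, deriv f (z - h * w) * φ w)
      (nhdsWithin 0 (Set.Ioi 0)) (nhds ((fl + fr) / 2)) := by
    set G : ℝ → ℝ := fun w => if 0 < w then fl * φ w else fr * φ w with hG
    have hGeq : G = fun w => (Ioi (0 : ℝ)).indicator (fun w => fl * φ w) w
        + (Iic (0 : ℝ)).indicator (fun w => fr * φ w) w := by
      funext w
      by_cases hw : 0 < w
      · simp [hG, hw, indicator, not_le.mpr hw]
      · simp [hG, hw, indicator, not_lt.mp hw]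
    have hint_eq : (∫ w, G w) = (fl + fr) / 2 := by
      rw [hGeq]
      rw [integral_add ((hφint.const_mul fl).indicator measurableSet_Ioi)
        ((hφint.const_mul fr).indicator measurableSet_Iic)]
      rw [integral_indicator measurableSet_Ioi, integral_indicator measurableSet_Iic]
      rw [integral_const_mul, integral_const_mul]
      have hsym : (∫ w in Ioi (0 : ℝ), φ w) = ∫ w in Iic (0 : ℝ), φ w := by
        have e := integral_comp_neg_Ioi (0 : ℝ) φ
        rw [neg_zero] at e
        calc (∫ w in Ioi (0 : ℝ), φ w) = ∫ w in Ioi (0 : ℝ), φ (-w) :=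
              setIntegral_congr_fun measurableSet_Ioi fun w _ => (hφsym w).symm
          _ = ∫ w in Iic (0 : ℝ), φ w := e
      have hsum : (∫ w in Ioi (0 : ℝ), φ w) + ∫ w in Iic (0 : ℝ), φ w = 1 := by
        rw [← hφ1]
        have e := integral_add_compl (measurableSet_Ioi (a := (0 : ℝ))) hφint
        rw [compl_Ioi] at e
        exact e
      have hI1 : (∫ w in Ioi (0 : ℝ), φ w) = 1 / 2 := by linarith
      have hI2 : (∫ w in Iic (0 : ℝ), φ w) = 1 / 2 := by linarith
      rw [hI1, hI2]
      ring
    rw [← hint_eq]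
    apply tendsto_integral_filter_of_dominated_convergence (bound := fun w => M * φ w)
    · apply Eventually.of_forall
      intro h
      apply Measurable.aestronglyMeasurable
      exact ((measurable_deriv f).comp
        (measurable_const.sub (measurable_const.mul measurable_id))).mul hφc.measurable
    · have hIoc : Ioc (0 : ℝ) 1 ∈ nhdsWithin (0 : ℝ) (Set.Ioi 0) :=
        Ioc_mem_nhdsGT_of_mem (by constructor <;> norm_num)
      filter_upwards [hIoc] with h hh
      obtain ⟨hh1, hh2⟩ := hh
      filter_upwards [hae] with w hw
      by_cases hwC : |w| ≤ C
      · have hhw : |h * w| ≤ C := by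
          rw [abs_mul, abs_of_pos hh1]
          calc h * |w| ≤ 1 * |w| := mul_le_mul_of_nonneg_right hh2 (abs_nonneg _)
            _ = |w| := one_mul _
            _ ≤ C := hwC
        obtain ⟨hw1, hw2⟩ := abs_le.mp hhw
        have hmem2 : z - h * w ∈ Icc (z - C) (z + C) := ⟨by linarith, by linarith⟩
        have hne2 : z - h * w ≠ z := by
          intro hcon
          exact hw ((mul_eq_zero.mp (sub_eq_self.mp hcon)).resolve_left (ne_of_gt hh1))
        have hb := deriv_bound _ hmem2 hne2
        rw [Real.norm_eq_abs, abs_mul, abs_of_nonneg (hφpos w)]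
        exact mul_le_mul_of_nonneg_right hb (hφpos w)
      · rw [hφsupp w (not_le.mp hwC)]
        simp
    · exact hφint.const_mul M
    · filter_upwards [hae] with w hw
      rcases lt_or_gt_of_ne hw with hneg | hpos
      · have hGw : G w = fr * φ w := if_neg (not_lt.mpr hneg.le)
        rw [hGw]
        have hmap : Tendsto (fun h : ℝ => z - h * w) (nhdsWithin 0 (Set.Ioi 0))
            (nhdsWithin z (Ioi z)) := by
          rw [tendsto_nhdsWithin_iff]
          constructor
          · have h1 : Tendsto (fun h : ℝ => z - h * w) (nhds 0) (nhds (z - 0 * w)) :=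
              (continuous_const.sub (continuous_id.mul continuous_const)).tendsto 0
            have h2 : z - 0 * w = z := by ring
            rw [h2] at h1
            exact h1.mono_left nhdsWithin_le_nhds
          · filter_upwards [self_mem_nhdsWithin] with h hh
            simp only [Set.mem_Ioi] at hh ⊢
            nlinarith
        exact (limR.comp hmap).mul_const (φ w)
      · have hGw : G w = fl * φ w := if_pos hpos
        rw [hGw]
        have hmap : Tendsto (fun h : ℝ => z - h * w) (nhdsWithin 0 (Set.Ioi 0))
            (nhdsWithin z (Iio z)) := by
          rw [tendsto_nhdsWithin_iff]
          constructor
          · have h1 : Tendsto (fun h : ℝ => z - h * w) (nhds 0) (nhds (z - 0 * w)) :=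
              (continuous_const.sub (continuous_id.mul continuous_const)).tendsto 0
            have h2 : z - 0 * w = z := by ring
            rw [h2] at h1
            exact h1.mono_left nhdsWithin_le_nhds
          · filter_upwards [self_mem_nhdsWithin] with h hh
            simp only [Set.mem_Ioi] at hh
            simp only [Set.mem_Iio]
            nlinarith
        exact (limL.comp hmap).mul_const (φ w)
  have heq : ∀ᶠ h in nhdsWithin (0 : ℝ) (Set.Ioi 0),
      (fun h : ℝ => ∫ w, deriv f (z - h * w) * φ w) h
        = (fun h : ℝ => deriv (fun t : ℝ => (1 / h) * ∫ u, f u * φ ((t - u) / h)) z) h := by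
    filter_upwards [self_mem_nhdsWithin] with h hh
    exact (deriv_formula h hh).symm
  exact Filter.Tendsto.congr' heq main
end

section
/- Under the same hypotheses, if f'₊(z) > f'₋(z) (a genuine kink at z), then the second derivative of the smoothed function diverges: lim_{h→0} f_h''(z) = +∞. -/
open MeasureTheory Set Filter intervalIntegral

/-- A continuous function vanishing outside `[-C, C]` is globally bounded. -/
lemma supp_bound {g : ℝ → ℝ} (hg : Continuous g) (C : ℝ)
    (hsupp : ∀ w, C < |w| → g w = 0) : ∃ M : ℝ, 0 ≤ M ∧ ∀ w, |g w| ≤ M := by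
  obtain ⟨M, hM⟩ := (isCompact_Icc (a := -C) (b := C)).exists_bound_of_continuousOn
    hg.continuousOn
  refine ⟨max M 0, le_max_right _ _, fun w => ?_⟩
  by_cases hw : C < |w|
  · simp [hsupp w hw, le_max_right]
  · push_neg at hw
    have : w ∈ Icc (-C) C := abs_le.mp hw
    exact le_trans (by simpa [Real.norm_eq_abs] using hM w this) (le_max_left _ _)

/-- The derivative of a function vanishing outside `[-C,C]` also vanishes there. -/
lemma deriv_supp {g : ℝ → ℝ} {C : ℝ} (hsupp : ∀ w, C < |w| → g w = 0) :
    ∀ w, C < |w| → deriv g w = 0 := by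
  intro w hw
  have hopen : IsOpen {v : ℝ | C < |v|} := isOpen_lt continuous_const continuous_abs
  have hev : g =ᶠ[nhds w] (fun _ => (0:ℝ)) :=
    Filter.eventuallyEq_iff_exists_mem.mpr ⟨_, hopen.mem_nhds hw, fun v hv => hsupp v hv⟩
  rw [hev.deriv_eq, deriv_const]

/-- Differentiation under the integral sign for kernel smoothing. -/
lemma paramDeriv {f ψ : ℝ → ℝ} {C h : ℝ} (hC0 : 0 ≤ C) (hh : 0 < h)
    (hf : Continuous f) (hψ : Differentiable ℝ ψ) (hψc : Continuous ψ)
    (hψ'c : Continuous (deriv ψ)) (hsupp : ∀ w, C < |w| → ψ w = 0)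
    (hsupp' : ∀ w, C < |w| → deriv ψ w = 0)
    (hM : ∃ M : ℝ, 0 ≤ M ∧ ∀ w, |deriv ψ w| ≤ M) (t : ℝ) :
    HasDerivAt (fun x : ℝ => ∫ u, f u * ψ ((x - u) / h))
      ((1 / h) * ∫ u, f u * deriv ψ ((t - u) / h)) t := by
  obtain ⟨M, hM0, hM⟩ := hM
  have hCh : 0 ≤ C * h := mul_nonneg hC0 hh.le
  have hgen : ∀ (g : ℝ → ℝ), (∀ w, C < |w| → g w = 0) → ∀ x u : ℝ, C * h < |x - u| →
      g ((x - u) / h) = 0 := by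
    intro g hg x u hxu
    apply hg
    rw [abs_div, abs_of_pos hh, lt_div_iff₀ hh]
    exact hxu
  have hcont : ∀ x : ℝ, Continuous (fun u => f u * ψ ((x - u) / h)) := fun x =>
    hf.mul (hψc.comp ((continuous_const.sub continuous_id).div_const h))
  have hcont' : ∀ x : ℝ, Continuous (fun u => f u * (deriv ψ ((x - u) / h) * (1 / h))) :=
    fun x => hf.mul ((hψ'c.comp ((continuous_const.sub continuous_id).div_const h)).mul
      continuous_const)
  have hCS : ∀ x : ℝ, HasCompactSupport (fun u => f u * ψ ((x - u) / h)) := by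
    intro x
    apply HasCompactSupport.intro (isCompact_Icc (a := x - C * h) (b := x + C * h))
    intro u hu
    simp only [mem_Icc, not_and_or, not_le] at hu
    have : C * h < |x - u| := by
      rcases hu with hu | hu
      · rw [abs_of_pos (by linarith)]; linarith
      · rw [abs_of_neg (by linarith)]; linarith
    simp [hgen ψ hsupp x u this]
  have hInt : ∀ x : ℝ, Integrable (fun u => f u * ψ ((x - u) / h)) := fun x =>
    (hcont x).integrable_of_hasCompactSupport (hCS x)
  have h_bound : ∀ u : ℝ, ∀ x ∈ Metric.ball t 1,
      ‖f u * (deriv ψ ((x - u) / h) * (1 / h))‖ ≤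
      ((Icc (t - (1 + C * h)) (t + (1 + C * h))).indicator
        (fun u => |f u| * (M * (1 / h)))) u := by
    intro u x hx
    have hdist : |x - t| < 1 := by
      have := Metric.mem_ball.mp hx; rwa [Real.dist_eq] at this
    obtain ⟨hd1, hd2⟩ := abs_lt.mp hdist
    by_cases hu : u ∈ Icc (t - (1 + C * h)) (t + (1 + C * h))
    · rw [Set.indicator_of_mem hu, Real.norm_eq_abs, abs_mul, abs_mul]
      have h1h : |1 / h| = 1 / h := abs_of_pos (by positivity)
      rw [h1h]
      exact mul_le_mul_of_nonneg_left
        (mul_le_mul_of_nonneg_right (hM _) (by positivity)) (abs_nonneg _)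
    · rw [Set.indicator_of_notMem hu]
      simp only [mem_Icc, not_and_or, not_le] at hu
      have : C * h < |x - u| := by
        rcases hu with hu | hu
        · rw [abs_of_pos (by linarith)]; linarith
        · rw [abs_of_neg (by linarith)]; linarith
      simp [hgen _ hsupp' x u this]
  have hbi : Integrable ((Icc (t - (1 + C * h)) (t + (1 + C * h))).indicator
      (fun u => |f u| * (M * (1 / h)))) := by
    apply MeasureTheory.IntegrableOn.integrable_indicator _ measurableSet_Icc
    exact ((hf.abs.mul continuous_const).integrableOn_Icc)
  have h_diff : ∀ u : ℝ, ∀ x ∈ Metric.ball t 1,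
      HasDerivAt (fun x => f u * ψ ((x - u) / h))
        (f u * (deriv ψ ((x - u) / h) * (1 / h))) x := by
    intro u x _
    have h1 : HasDerivAt (fun x : ℝ => (x - u) / h) (1 / h) x := by
      simpa using ((hasDerivAt_id x).sub_const u).div_const h
    exact (((hψ ((x - u) / h)).hasDerivAt).comp x h1).const_mul (f u)
  have key := (hasDerivAt_integral_of_dominated_loc_of_deriv_le (Metric.ball_mem_nhds t one_pos)
    (Filter.Eventually.of_forall fun x => (hcont x).aestronglyMeasurable) (hInt t)
    ((hcont' t).aestronglyMeasurable)
    (Filter.Eventually.of_forall h_bound) hbi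
    (Filter.Eventually.of_forall h_diff)).2
  refine key.congr_deriv ?_
  rw [show (fun u => f u * (deriv ψ ((t - u) / h) * (1 / h)))
      = fun u => (f u * deriv ψ ((t - u) / h)) * (1 / h) from funext fun u => by ring]
  rw [MeasureTheory.integral_mul_const]
  ring

set_option maxHeartbeats 1000000 in
lemma stmt3_key (f φ : ℝ → ℝ) (C z fl fr : ℝ) (hC : 0 < C)
    (hconv : ConvexOn ℝ Set.univ f)
    (hC2 : ContDiffOn ℝ 2 f {z}ᶜ)
    (hfl : HasDerivWithinAt f fl (Set.Iic z) z)
    (hfr : HasDerivWithinAt f fr (Set.Ici z) z)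
    (hkink : fl < fr)
    (hφsm : ContDiff ℝ (⊤ : ℕ∞) φ)
    (hφpos : ∀ w, 0 ≤ φ w)
    (hφsupp : ∀ w, C < |w| → φ w = 0)
    {h : ℝ} (hh : 0 < h) :
    (fr - fl) * φ 0 / h ≤
      deriv (deriv (fun t : ℝ => (1 / h) * ∫ u, f u * φ ((t - u) / h))) z := by
  -- basic continuity and smoothness facts
  have hf : Continuous f := by
    rw [← continuousOn_univ]
    simpa using hconv.continuousOn isOpen_univ
  have hphiT : ContDiff ℝ (⊤ : ℕ∞) φ := hφsm.of_le (by simp)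
  set φ1 : ℝ → ℝ := deriv φ with hφ1def
  set φ2 : ℝ → ℝ := deriv φ1 with hφ2def
  have hφd : Differentiable ℝ φ := hphiT.differentiable (by simp)
  have hφ1sm : ContDiff ℝ (⊤ : ℕ∞) φ1 := (contDiff_infty_iff_deriv.mp hphiT).2
  have hφ1d : Differentiable ℝ φ1 := hφ1sm.differentiable (by simp)
  have hφ2sm : ContDiff ℝ (⊤ : ℕ∞) φ2 := (contDiff_infty_iff_deriv.mp hφ1sm).2
  have hφc : Continuous φ := hphiT.continuous
  have hφ1c : Continuous φ1 := hφ1sm.continuous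
  have hφ2c : Continuous φ2 := hφ2sm.continuous
  have hφ1supp : ∀ w, C < |w| → φ1 w = 0 := deriv_supp hφsupp
  have hφ2supp : ∀ w, C < |w| → φ2 w = 0 := deriv_supp hφ1supp
  -- differentiability of f away from z
  have hopen : IsOpen ({z}ᶜ : Set ℝ) := isOpen_compl_singleton
  have hdiff : ∀ u : ℝ, u ≠ z → DifferentiableAt ℝ f u := by
    intro u hu
    exact (hC2.differentiableOn (by norm_num)).differentiableAt (hopen.mem_nhds hu)
  have hC2' : ContDiffOn ℝ 1 (deriv f) ({z}ᶜ) := hC2.deriv_of_isOpen hopen (by norm_num)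
  have hf'c : ContinuousOn (deriv f) ({z}ᶜ) := hC2'.continuousOn
  have hf''at : ∀ u : ℝ, u ≠ z → HasDerivAt (deriv f) (deriv (deriv f) u) u := by
    intro u hu
    exact ((hC2'.differentiableOn (by norm_num)).differentiableAt (hopen.mem_nhds hu)).hasDerivAt
  have hf''c : ContinuousOn (deriv (deriv f)) ({z}ᶜ) :=
    hC2'.continuousOn_deriv_of_isOpen hopen le_rfl
  -- convexity facts
  have hC1 : ∀ u : ℝ, u < z → deriv f u ≤ fl := by
    intro u hu
    have h1 : deriv f u ≤ slope f u z :=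
      hconv.deriv_le_slope (mem_univ u) (mem_univ z) hu (hdiff u hu.ne)
    have h2 : slope f u z ≤ fl :=
      hconv.slope_le_of_hasDerivWithinAt_Iio (mem_univ u) (mem_univ z) hu
        (hfl.mono Iio_subset_Iic_self)
    linarith
  have hC2g : ∀ u : ℝ, z < u → fr ≤ deriv f u := by
    intro u hu
    have h1 : fr ≤ slope f z u :=
      hconv.le_slope_of_hasDerivWithinAt_Ioi (mem_univ z) (mem_univ u) hu
        (hfr.mono Ioi_subset_Ici_self)
    have h2 : slope f z u ≤ deriv f u :=
      hconv.slope_le_deriv (mem_univ z) (mem_univ u) hu (hdiff u hu.ne')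
    linarith
  have hmonoIio : MonotoneOn (deriv f) (Iio z) :=
    (hconv.subset (subset_univ _) (convex_Iio z)).monotoneOn_deriv
      (fun x hx => hdiff x (ne_of_lt hx))
  have hmonoIoi : MonotoneOn (deriv f) (Ioi z) :=
    (hconv.subset (subset_univ _) (convex_Ioi z)).monotoneOn_deriv
      (fun x hx => hdiff x (ne_of_gt hx))
  have hsec : ∀ u : ℝ, u ≠ z → 0 ≤ deriv (deriv f) u := by
    intro u hu
    have hd := hasDerivAt_iff_tendsto_slope.mp (hf''at u hu)
    rcases lt_or_gt_of_ne hu with hu' | hu'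
    · refine ge_of_tendsto hd ?_
      have hmem : Iio z ∈ nhdsWithin u ({u}ᶜ) :=
        mem_nhdsWithin_of_mem_nhds (Iio_mem_nhds hu')
      filter_upwards [hmem, self_mem_nhdsWithin] with v hv hvne
      have hvu : v ≠ u := hvne
      rw [slope_def_field]
      rcases lt_or_gt_of_ne hvu with hlt | hgt
      · apply div_nonneg_of_nonpos
        · exact sub_nonpos.mpr (hmonoIio hv hu' hlt.le)
        · exact sub_nonpos.mpr hlt.le
      · apply div_nonneg
        · exact sub_nonneg.mpr (hmonoIio hu' hv hgt.le)
        · exact sub_nonneg.mpr hgt.le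
    · refine ge_of_tendsto hd ?_
      have hmem : Ioi z ∈ nhdsWithin u ({u}ᶜ) :=
        mem_nhdsWithin_of_mem_nhds (Ioi_mem_nhds hu')
      filter_upwards [hmem, self_mem_nhdsWithin] with v hv hvne
      have hvu : v ≠ u := hvne
      rw [slope_def_field]
      rcases lt_or_gt_of_ne hvu with hlt | hgt
      · apply div_nonneg_of_nonpos
        · exact sub_nonpos.mpr (hmonoIoi hv hu' hlt.le)
        · exact sub_nonpos.mpr hlt.le
      · apply div_nonneg
        · exact sub_nonneg.mpr (hmonoIoi hu' hv hgt.le)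
        · exact sub_nonneg.mpr hgt.le
  -- differentiate under the integral twice
  have hpd1 : ∀ t : ℝ, HasDerivAt (fun x : ℝ => (1/h) * ∫ u, f u * φ ((x - u)/h))
      ((1/h) * ((1/h) * ∫ u, f u * φ1 ((t - u)/h))) t := fun t =>
    (paramDeriv hC.le hh hf hφd hφc hφ1c hφsupp hφ1supp (supp_bound hφ1c C hφ1supp) t).const_mul
      (1/h)
  have hDeq : (deriv fun t : ℝ => (1/h) * ∫ u, f u * φ ((t - u)/h))
      = fun t : ℝ => (1/h) * ((1/h) * ∫ u, f u * φ1 ((t - u)/h)) :=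
    funext fun t => (hpd1 t).deriv
  have hpd2 : HasDerivAt (fun t : ℝ => (1/h) * ((1/h) * ∫ u, f u * φ1 ((t - u)/h)))
      ((1/h) * ((1/h) * ((1/h) * ∫ u, f u * φ2 ((z - u)/h)))) z :=
    ((paramDeriv hC.le hh hf hφ1d hφ1c hφ2c hφ1supp hφ2supp
      (supp_bound hφ2c C hφ2supp) z).const_mul (1/h)).const_mul (1/h)
  rw [show (1:ℝ)/h = 1/h from rfl, hDeq, hpd2.deriv]
  -- it remains to bound the integral from below
  set a : ℝ := z - (C+1)*h with ha
  set b : ℝ := z + (C+1)*h with hb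
  have haz : a < z := by
    have : 0 < (C+1)*h := by positivity
    simp only [ha]; linarith
  have hzb : z < b := by
    have : 0 < (C+1)*h := by positivity
    simp only [hb]; linarith
  -- continuity helpers
  have hcomp : ∀ (ψ : ℝ → ℝ), Continuous ψ → Continuous (fun u : ℝ => ψ ((z - u)/h)) :=
    fun ψ hψ => hψ.comp ((continuous_const.sub continuous_id).div_const h)
  have hgc : Continuous (fun u : ℝ => f u * φ2 ((z - u)/h)) := hf.mul (hcomp φ2 hφ2c)
  -- support restriction to [a, b]
  have hvanish : ∀ (ψ : ℝ → ℝ), (∀ w, C < |w| → ψ w = 0) → ∀ u : ℝ, u ∉ Ioc a b →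
      ψ ((z - u)/h) = 0 := by
    intro ψ hψ u hu
    apply hψ
    rw [abs_div, abs_of_pos hh, lt_div_iff₀ hh]
    have hCh : C * h < (C+1) * h := by nlinarith
    simp only [mem_Ioc, not_and_or, not_lt, not_le] at hu
    rcases hu with hu | hu
    · rw [abs_of_pos (by simp only [ha] at hu ⊢; nlinarith)]
      simp only [ha] at hu; nlinarith
    · rw [abs_of_neg (by simp only [hb] at hu ⊢; nlinarith)]
      simp only [hb] at hu; nlinarith
  have hIeq : ∫ u, f u * φ2 ((z - u)/h) = ∫ u in a..b, f u * φ2 ((z - u)/h) := by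
    rw [intervalIntegral.integral_of_le (by linarith : a ≤ b)]
    rw [setIntegral_eq_integral_of_forall_compl_eq_zero]
    intro u hu
    rw [hvanish φ2 hφ2supp u hu, mul_zero]
  -- interval integrability of products with deriv f
  have hIIgen : ∀ (p q : ℝ), p ≤ q → (∀ u ∈ Ioo p q, u ≠ z) →
      (∃ B : ℝ, 0 ≤ B ∧ ∀ u ∈ Ioo p q, |deriv f u| ≤ B) → ∀ (G : ℝ → ℝ), Continuous G →
      IntervalIntegrable (fun u => deriv f u * G u) volume p q := by
    intro p q hpq _ hBex G hG
    obtain ⟨B, hBnn, hB⟩ := hBex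
    obtain ⟨MG, hMG⟩ := (isCompact_Icc (a := p) (b := q)).exists_bound_of_continuousOn
      hG.continuousOn
    rw [intervalIntegrable_iff, uIoc_of_le hpq]
    rw [integrableOn_Ioc_iff_integrableOn_Ioo]
    apply Measure.integrableOn_of_bounded (M := B * MG)
    · exact (measure_Ioo_lt_top).ne
    · exact ((measurable_deriv f).mul hG.measurable).aestronglyMeasurable
    · refine (ae_restrict_iff' measurableSet_Ioo).mpr (ae_of_all _ fun u hu => ?_)
      rw [Real.norm_eq_abs, abs_mul]
      refine mul_le_mul (hB u hu) ?_ (abs_nonneg _) hBnn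
      have := hMG u (Ioo_subset_Icc_self hu)
      rwa [Real.norm_eq_abs] at this
  have hBl : ∃ B : ℝ, 0 ≤ B ∧ ∀ u ∈ Ioo a z, |deriv f u| ≤ B := by
    refine ⟨max |deriv f (a-1)| |fl|, le_trans (abs_nonneg _) (le_max_left _ _),
      fun u hu => abs_le_max_abs_abs ?_ ?_⟩
    · exact hmonoIio (show a - 1 ∈ Iio z by simp only [mem_Iio]; linarith)
        (show u ∈ Iio z from hu.2) (by linarith [hu.1])
    · exact hC1 u hu.2
  have hBr : ∃ B : ℝ, 0 ≤ B ∧ ∀ u ∈ Ioo z b, |deriv f u| ≤ B := by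
    refine ⟨max |fr| |deriv f (b+1)|, le_trans (abs_nonneg _) (le_max_left _ _),
      fun u hu => abs_le_max_abs_abs ?_ ?_⟩
    · exact hC2g u hu.1
    · exact hmonoIoi (show u ∈ Ioi z from hu.1)
        (show b + 1 ∈ Ioi z by simp only [mem_Ioi]; linarith) (by linarith [hu.2])
  have hIIl : ∀ (G : ℝ → ℝ), Continuous G →
      IntervalIntegrable (fun u => deriv f u * G u) volume a z :=
    hIIgen a z haz.le (fun u hu => ne_of_lt hu.2) hBl
  have hIIr : ∀ (G : ℝ → ℝ), Continuous G →
      IntervalIntegrable (fun u => deriv f u * G u) volume z b :=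
    hIIgen z b hzb.le (fun u hu => ne_of_gt hu.1) hBr
  -- pointwise derivative formulas
  have hlin : ∀ u : ℝ, HasDerivAt (fun u : ℝ => (z - u)/h) (-1/h) u := fun u =>
    ((hasDerivAt_id u).const_sub z).div_const h
  have hF1d : ∀ u : ℝ, u ≠ z → HasDerivAt (fun u => -h * (f u * φ1 ((z - u)/h)))
      (-h * (deriv f u * φ1 ((z - u)/h)) + f u * φ2 ((z - u)/h)) u := by
    intro u hu
    have hφ1comp : HasDerivAt (fun u : ℝ => φ1 ((z - u)/h)) (φ2 ((z - u)/h) * (-1/h)) u :=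
      ((hφ1d _).hasDerivAt).comp u (hlin u)
    have hmul := ((hdiff u hu).hasDerivAt.mul hφ1comp).const_mul (-h)
    refine hmul.congr_deriv ?_
    field_simp
    ring
  have hGd : ∀ u : ℝ, u ≠ z → HasDerivAt (fun u => -h * (deriv f u * φ ((z - u)/h)))
      (-h * (deriv (deriv f) u * φ ((z - u)/h)) + deriv f u * φ1 ((z - u)/h)) u := by
    intro u hu
    have hφcomp : HasDerivAt (fun u : ℝ => φ ((z - u)/h)) (φ1 ((z - u)/h) * (-1/h)) u :=
      ((hφd _).hasDerivAt).comp u (hlin u)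
    have hmul := ((hf''at u hu).mul hφcomp).const_mul (-h)
    refine hmul.congr_deriv ?_
    field_simp
    ring
  -- values of kernels at the endpoints
  have hza : (z - a)/h = C + 1 := by rw [ha]; field_simp; ring
  have hzb' : (z - b)/h = -(C + 1) := by rw [hb]; field_simp; ring
  have hzz : (z - z)/h = 0 := by simp
  have hCC1 : C < |C + 1| := by rw [abs_of_pos (by linarith)]; linarith
  have hCC1' : C < |-(C + 1)| := by rw [abs_neg]; exact hCC1
  -- first integration by parts on [a, z]
  have hFTC1l : ∫ u in a..z, (-h * (deriv f u * φ1 ((z - u)/h)) + f u * φ2 ((z - u)/h))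
      = -h * (f z * φ1 0) := by
    have hco : ContinuousOn (fun u => -h * (f u * φ1 ((z - u)/h))) (Icc a z) :=
      (continuous_const.mul (hf.mul (hcomp φ1 hφ1c))).continuousOn
    have := integral_eq_sub_of_hasDerivAt_of_le haz.le hco
      (fun u hu => hF1d u (ne_of_lt hu.2))
      (((hIIl _ (hcomp φ1 hφ1c)).const_mul (-h)).add (hgc.intervalIntegrable a z))
    rw [this, hza, hzz, hφ1supp (C+1) hCC1]
    ring
  -- first integration by parts on [z, b]
  have hFTC1r : ∫ u in z..b, (-h * (deriv f u * φ1 ((z - u)/h)) + f u * φ2 ((z - u)/h))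
      = h * (f z * φ1 0) := by
    have hco : ContinuousOn (fun u => -h * (f u * φ1 ((z - u)/h))) (Icc z b) :=
      (continuous_const.mul (hf.mul (hcomp φ1 hφ1c))).continuousOn
    have := integral_eq_sub_of_hasDerivAt_of_le hzb.le hco
      (fun u hu => hF1d u (ne_of_gt hu.1))
      (((hIIr _ (hcomp φ1 hφ1c)).const_mul (-h)).add (hgc.intervalIntegrable z b))
    rw [this, hzb', hzz, hφ1supp (-(C+1)) hCC1']
    ring
  -- extract the smoothed-integral pieces
  set J : ℝ := ∫ u in a..z, deriv f u * φ1 ((z - u)/h) with hJ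
  set K : ℝ := ∫ u in z..b, deriv f u * φ1 ((z - u)/h) with hK
  have hJeq : ∫ u in a..z, f u * φ2 ((z - u)/h) = -h * (f z * φ1 0) + h * J := by
    have hadd : ∫ u in a..z, (-h * (deriv f u * φ1 ((z - u)/h)) + f u * φ2 ((z - u)/h))
        = (∫ u in a..z, -h * (deriv f u * φ1 ((z - u)/h)))
          + ∫ u in a..z, f u * φ2 ((z - u)/h) :=
      intervalIntegral.integral_add ((hIIl _ (hcomp φ1 hφ1c)).const_mul (-h))
        (hgc.intervalIntegrable a z)
    have hcm : ∫ u in a..z, -h * (deriv f u * φ1 ((z - u)/h)) = -h * J :=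
      intervalIntegral.integral_const_mul _ _
    rw [hadd, hcm] at hFTC1l
    linarith
  have hKeq : ∫ u in z..b, f u * φ2 ((z - u)/h) = h * (f z * φ1 0) + h * K := by
    have hadd : ∫ u in z..b, (-h * (deriv f u * φ1 ((z - u)/h)) + f u * φ2 ((z - u)/h))
        = (∫ u in z..b, -h * (deriv f u * φ1 ((z - u)/h)))
          + ∫ u in z..b, f u * φ2 ((z - u)/h) :=
      intervalIntegral.integral_add ((hIIr _ (hcomp φ1 hφ1c)).const_mul (-h))
        (hgc.intervalIntegrable z b)
    have hcm : ∫ u in z..b, -h * (deriv f u * φ1 ((z - u)/h)) = -h * K :=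
      intervalIntegral.integral_const_mul _ _
    rw [hadd, hcm] at hFTC1r
    linarith
  -- lower bound for J
  have hJb : -h * (fl * φ 0) ≤ J := by
    have hIIφ1 : IntervalIntegrable (fun u => deriv f u * φ1 ((z - u)/h)) volume a z :=
      hIIl _ (hcomp φ1 hφ1c)
    have hcw := intervalIntegral.continuousWithinAt_primitive (a := a) (b₁ := a) (b₂ := z)
      (b₀ := z) (μ := volume) (f := fun u => deriv f u * φ1 ((z - u)/h))
      (measure_singleton z) (by rw [min_self, max_eq_right haz.le]; exact hIIφ1)
    have hprim : Tendsto (fun t => ∫ u in a..t, deriv f u * φ1 ((z - u)/h))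
        (nhdsWithin z (Ioo a z)) (nhds J) :=
      hcw.tendsto.mono_left (nhdsWithin_mono _ Ioo_subset_Icc_self)
    have hlimR : Tendsto (fun t : ℝ => -h * (fl * φ ((z - t)/h)))
        (nhdsWithin z (Ioo a z)) (nhds (-h * (fl * φ 0))) := by
      have hct : Continuous (fun t : ℝ => -h * (fl * φ ((z - t)/h))) :=
        continuous_const.mul (continuous_const.mul (hcomp φ hφc))
      have := (hct.tendsto z).mono_left (nhdsWithin_le_nhds (s := Ioo a z))
      simpa [hzz] using this
    haveI hNB : (nhdsWithin z (Ioo a z)).NeBot := by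
      apply mem_closure_iff_nhdsWithin_neBot.mp
      rw [closure_Ioo (ne_of_lt haz)]
      exact ⟨haz.le, le_refl z⟩
    refine le_of_tendsto_of_tendsto hlimR hprim ?_
    filter_upwards [self_mem_nhdsWithin] with t ht
    have htz : t < z := ht.2
    have hat : a ≤ t := ht.1.le
    have hsub : uIcc a t ⊆ ({z}ᶜ : Set ℝ) := by
      rw [uIcc_of_le hat]
      intro u hu
      exact ne_of_lt (lt_of_le_of_lt hu.2 htz)
    have hcoset : ContinuousOn (fun u => -h * (deriv (deriv f) u * φ ((z - u)/h))
        + deriv f u * φ1 ((z - u)/h)) (uIcc a t) :=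
      (continuous_const.continuousOn.mul ((hf''c.mono hsub).mul
        ((hcomp φ hφc).continuousOn))).add ((hf'c.mono hsub).mul
        ((hcomp φ1 hφ1c).continuousOn))
    have hFTC2 := integral_eq_sub_of_hasDerivAt
      (fun u hu => hGd u (hsub hu)) (hcoset.intervalIntegrable)
    have hGa : -h * (deriv f a * φ ((z - a)/h)) = 0 := by
      rw [hza, hφsupp (C+1) hCC1]; ring
    have hII2 : IntervalIntegrable (fun u => deriv (deriv f) u * φ ((z - u)/h)) volume a t :=
      ContinuousOn.intervalIntegrable ((hf''c.mono hsub).mul ((hcomp φ hφc).continuousOn))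
    have hII3 : IntervalIntegrable (fun u => deriv f u * φ1 ((z - u)/h)) volume a t :=
      ContinuousOn.intervalIntegrable ((hf'c.mono hsub).mul ((hcomp φ1 hφ1c).continuousOn))
    have hadd : ∫ u in a..t, (-h * (deriv (deriv f) u * φ ((z - u)/h))
          + deriv f u * φ1 ((z - u)/h))
        = (-h) * (∫ u in a..t, deriv (deriv f) u * φ ((z - u)/h))
          + ∫ u in a..t, deriv f u * φ1 ((z - u)/h) := by
      rw [intervalIntegral.integral_add (hII2.const_mul (-h)) hII3,
        intervalIntegral.integral_const_mul]
    have hpos : 0 ≤ ∫ u in a..t, deriv (deriv f) u * φ ((z - u)/h) := by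
      apply intervalIntegral.integral_nonneg hat
      intro u hu
      exact mul_nonneg (hsec u (hsub (by rw [uIcc_of_le hat]; exact hu))) (hφpos _)
    rw [hadd, hGa] at hFTC2
    have h1 : deriv f t ≤ fl := hC1 t htz
    have h2 : 0 ≤ φ ((z - t)/h) := hφpos _
    nlinarith [mul_nonneg hh.le hpos,
      mul_nonneg (mul_nonneg hh.le h2) (sub_nonneg.mpr h1)]
  -- lower bound for K
  have hKb : h * (fr * φ 0) ≤ K := by
    have hIIφ1 : IntervalIntegrable (fun u => deriv f u * φ1 ((z - u)/h)) volume z b :=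
      hIIr _ (hcomp φ1 hφ1c)
    have hcw := intervalIntegral.continuousWithinAt_primitive (a := b) (b₁ := z) (b₂ := b)
      (b₀ := z) (μ := volume) (f := fun u => deriv f u * φ1 ((z - u)/h))
      (measure_singleton z) (by rw [min_eq_right hzb.le, max_self]; exact hIIφ1)
    have hprim : Tendsto (fun t => ∫ u in t..b, deriv f u * φ1 ((z - u)/h))
        (nhdsWithin z (Ioo z b)) (nhds K) := by
      have hneg := hcw.neg
      have hfun : (fun t => -∫ u in b..t, deriv f u * φ1 ((z - u)/h))
          = fun t => ∫ u in t..b, deriv f u * φ1 ((z - u)/h) := by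
        funext t
        rw [intervalIntegral.integral_symm, neg_neg]
      have hneg' : Tendsto (fun t => -∫ u in b..t, deriv f u * φ1 ((z - u)/h))
          (nhdsWithin z (Icc z b))
          (nhds (-∫ u in b..z, deriv f u * φ1 ((z - u)/h))) := hneg
      have hval : -∫ u in b..z, deriv f u * φ1 ((z - u)/h) = K := by
        rw [intervalIntegral.integral_symm, neg_neg]
      rw [hfun, hval] at hneg'
      exact hneg'.mono_left (nhdsWithin_mono _ Ioo_subset_Icc_self)
    have hlimR : Tendsto (fun t : ℝ => h * (fr * φ ((z - t)/h)))
        (nhdsWithin z (Ioo z b)) (nhds (h * (fr * φ 0))) := by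
      have hct : Continuous (fun t : ℝ => h * (fr * φ ((z - t)/h))) :=
        continuous_const.mul (continuous_const.mul (hcomp φ hφc))
      have := (hct.tendsto z).mono_left (nhdsWithin_le_nhds (s := Ioo z b))
      simpa [hzz] using this
    haveI hNB : (nhdsWithin z (Ioo z b)).NeBot := by
      apply mem_closure_iff_nhdsWithin_neBot.mp
      rw [closure_Ioo (ne_of_lt hzb)]
      exact ⟨le_refl z, hzb.le⟩
    refine le_of_tendsto_of_tendsto hlimR hprim ?_
    filter_upwards [self_mem_nhdsWithin] with t ht
    have htz : z < t := ht.1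
    have htb : t ≤ b := ht.2.le
    have hsub : uIcc t b ⊆ ({z}ᶜ : Set ℝ) := by
      rw [uIcc_of_le htb]
      intro u hu
      exact ne_of_gt (lt_of_lt_of_le htz hu.1)
    have hcoset : ContinuousOn (fun u => -h * (deriv (deriv f) u * φ ((z - u)/h))
        + deriv f u * φ1 ((z - u)/h)) (uIcc t b) :=
      (continuous_const.continuousOn.mul ((hf''c.mono hsub).mul
        ((hcomp φ hφc).continuousOn))).add ((hf'c.mono hsub).mul
        ((hcomp φ1 hφ1c).continuousOn))
    have hFTC2 := integral_eq_sub_of_hasDerivAt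
      (fun u hu => hGd u (hsub hu)) (hcoset.intervalIntegrable)
    have hGb : -h * (deriv f b * φ ((z - b)/h)) = 0 := by
      rw [hzb', hφsupp (-(C+1)) hCC1']; ring
    have hII2 : IntervalIntegrable (fun u => deriv (deriv f) u * φ ((z - u)/h)) volume t b :=
      ContinuousOn.intervalIntegrable ((hf''c.mono hsub).mul ((hcomp φ hφc).continuousOn))
    have hII3 : IntervalIntegrable (fun u => deriv f u * φ1 ((z - u)/h)) volume t b :=
      ContinuousOn.intervalIntegrable ((hf'c.mono hsub).mul ((hcomp φ1 hφ1c).continuousOn))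
    have hadd : ∫ u in t..b, (-h * (deriv (deriv f) u * φ ((z - u)/h))
          + deriv f u * φ1 ((z - u)/h))
        = (-h) * (∫ u in t..b, deriv (deriv f) u * φ ((z - u)/h))
          + ∫ u in t..b, deriv f u * φ1 ((z - u)/h) := by
      rw [intervalIntegral.integral_add (hII2.const_mul (-h)) hII3,
        intervalIntegral.integral_const_mul]
    have hpos : 0 ≤ ∫ u in t..b, deriv (deriv f) u * φ ((z - u)/h) := by
      apply intervalIntegral.integral_nonneg htb
      intro u hu
      exact mul_nonneg (hsec u (hsub (by rw [uIcc_of_le htb]; exact hu))) (hφpos _)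
    rw [hadd, hGb] at hFTC2
    have h1 : fr ≤ deriv f t := hC2g t htz
    have h2 : 0 ≤ φ ((z - t)/h) := hφpos _
    nlinarith [mul_nonneg hh.le hpos,
      mul_nonneg (mul_nonneg hh.le h2) (sub_nonneg.mpr h1)]
  -- assemble
  have hIb : h^2 * ((fr - fl) * φ 0) ≤ ∫ u, f u * φ2 ((z - u)/h) := by
    rw [hIeq, ← intervalIntegral.integral_add_adjacent_intervals
      (hgc.intervalIntegrable a z) (hgc.intervalIntegrable z b), hJeq, hKeq]
    nlinarith [mul_le_mul_of_nonneg_left hJb hh.le, mul_le_mul_of_nonneg_left hKb hh.le]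
  calc (fr - fl) * φ 0 / h
      = (1/h) * ((1/h) * ((1/h) * (h^2 * ((fr - fl) * φ 0)))) := by
        field_simp
    _ ≤ (1/h) * ((1/h) * ((1/h) * ∫ u, f u * φ2 ((z - u)/h))) := by
        have h0 : (0:ℝ) ≤ 1/h := by positivity
        gcongr

/-- at a genuine kink `z` of a convex, piecewise twice differentiable
function `f` (with `f'₊(z) > f'₋(z)`), the second derivative of the kernel-smoothed
`f_h` at `z` diverges to `+∞` as `h → 0⁺`. -/
theorem stmt3 (f φ : ℝ → ℝ) (C z fl fr : ℝ) (hC : 0 < C)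
    (hconv : ConvexOn ℝ Set.univ f)
    (hC2 : ContDiffOn ℝ 2 f {z}ᶜ)
    (hfl : HasDerivWithinAt f fl (Set.Iic z) z)
    (hfr : HasDerivWithinAt f fr (Set.Ici z) z)
    (hkink : fl < fr)
    (hφsm : ContDiff ℝ (⊤ : ℕ∞) φ)
    (hφsym : ∀ w, φ (-w) = φ w)
    (hφpos : ∀ w, 0 ≤ φ w)
    (hφ0 : 0 < φ 0)
    (hφsupp : ∀ w, C < |w| → φ w = 0)
    (hφ1 : ∫ w, φ w = 1) :
    Filter.Tendsto
      (fun h : ℝ => deriv (deriv (fun t : ℝ => (1 / h) * ∫ u, f u * φ ((t - u) / h))) z)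
      (nhdsWithin 0 (Set.Ioi 0)) Filter.atTop := by
  apply Filter.tendsto_atTop_mono' _ _
    (Filter.Tendsto.const_mul_atTop (show (0:ℝ) < (fr - fl) * φ 0 by
      have := sub_pos.mpr hkink; positivity) tendsto_inv_nhdsGT_zero)
  filter_upwards [self_mem_nhdsWithin] with h hh
  have := stmt3_key f φ C z fl fr hC hconv hC2 hfl hfr hkink hφsm hφpos hφsupp hh
  simpa [div_eq_mul_inv] using this
end

section
/- Let A_n be a sequence of block matrices A_n = [[A_{1n}, A_{2n}],[A_{3n}, A_{4n}]] with A_{1n}, A_{4n} invertible for all n, A_{in} → A_i for i = 1,2,3 with A_1 invertible, and A_{4n}⁻¹ → 0. Then A_n⁻¹ → [[A_1⁻¹, 0],[0, 0]]. -/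
open Matrix Filter

section helpers

variable {α : Type*} {l : Filter α}

set_option maxHeartbeats 1000000 in
private lemma tendsto_matrix_mul {a b c : ℕ}
    {f : α → Matrix (Fin a) (Fin b) ℝ} {g : α → Matrix (Fin b) (Fin c) ℝ}
    {F : Matrix (Fin a) (Fin b) ℝ} {G : Matrix (Fin b) (Fin c) ℝ}
    (hf : Tendsto f l (nhds F)) (hg : Tendsto g l (nhds G)) :
    Tendsto (fun n => f n * g n) l (nhds (F * G)) :=
  ((Continuous.matrix_mul continuous_fst continuous_snd).tendsto (F, G)).comp
    (hf.prodMk_nhds hg)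

private lemma tendsto_matrix_fromBlocks {a b : ℕ}
    {f1 : α → Matrix (Fin a) (Fin a) ℝ} {f2 : α → Matrix (Fin a) (Fin b) ℝ}
    {f3 : α → Matrix (Fin b) (Fin a) ℝ} {f4 : α → Matrix (Fin b) (Fin b) ℝ}
    {F1 : Matrix (Fin a) (Fin a) ℝ} {F2 : Matrix (Fin a) (Fin b) ℝ}
    {F3 : Matrix (Fin b) (Fin a) ℝ} {F4 : Matrix (Fin b) (Fin b) ℝ}
    (h1 : Tendsto f1 l (nhds F1)) (h2 : Tendsto f2 l (nhds F2))
    (h3 : Tendsto f3 l (nhds F3)) (h4 : Tendsto f4 l (nhds F4)) :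
    Tendsto (fun n => Matrix.fromBlocks (f1 n) (f2 n) (f3 n) (f4 n)) l
      (nhds (Matrix.fromBlocks F1 F2 F3 F4)) := by
  have hc : Continuous (fun x : (Matrix (Fin a) (Fin a) ℝ × Matrix (Fin a) (Fin b) ℝ) ×
      (Matrix (Fin b) (Fin a) ℝ × Matrix (Fin b) (Fin b) ℝ) =>
      Matrix.fromBlocks x.1.1 x.1.2 x.2.1 x.2.2) :=
    Continuous.matrix_fromBlocks (continuous_fst.comp continuous_fst)
      (continuous_snd.comp continuous_fst) (continuous_fst.comp continuous_snd)
      (continuous_snd.comp continuous_snd)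
  exact (hc.tendsto ((F1, F2), (F3, F4))).comp
    ((h1.prodMk_nhds h2).prodMk_nhds (h3.prodMk_nhds h4))

/-- Block inverse formula for nonsingular inverses. -/
private lemma inv_fromBlocks_of_isUnit {a b : ℕ}
    (A : Matrix (Fin a) (Fin a) ℝ) (B : Matrix (Fin a) (Fin b) ℝ)
    (C : Matrix (Fin b) (Fin a) ℝ) (D : Matrix (Fin b) (Fin b) ℝ)
    (hD : IsUnit D) (hS : IsUnit (A - B * D⁻¹ * C)) :
    (Matrix.fromBlocks A B C D)⁻¹ =
      Matrix.fromBlocks (A - B * D⁻¹ * C)⁻¹ (-((A - B * D⁻¹ * C)⁻¹ * B * D⁻¹))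
        (-(D⁻¹ * C * (A - B * D⁻¹ * C)⁻¹))
        (D⁻¹ + D⁻¹ * C * (A - B * D⁻¹ * C)⁻¹ * B * D⁻¹) := by
  letI iD : Invertible D := hD.invertible
  have hDinv : ⅟ D = D⁻¹ := Matrix.invOf_eq_nonsing_inv D
  letI iS : Invertible (A - B * ⅟ D * C) := by rw [hDinv]; exact hS.invertible
  letI := Matrix.fromBlocks₂₂Invertible A B C D
  rw [← Matrix.invOf_eq_nonsing_inv, Matrix.invOf_fromBlocks₂₂_eq]
  simp only [Matrix.invOf_eq_nonsing_inv, hDinv]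

end helpers

/-- if `A_n = [[A₁ₙ, A₂ₙ], [A₃ₙ, A₄ₙ]]` with `A₁ₙ, A₄ₙ` invertible,
`A₁ₙ → A₁` (invertible), `A₂ₙ → A₂`, `A₃ₙ → A₃` and `A₄ₙ⁻¹ → 0`, then
`Aₙ⁻¹ → [[A₁⁻¹, 0], [0, 0]]`. -/
theorem stmt5 (p q : ℕ)
    (A1 : ℕ → Matrix (Fin p) (Fin p) ℝ) (A2 : ℕ → Matrix (Fin p) (Fin q) ℝ)
    (A3 : ℕ → Matrix (Fin q) (Fin p) ℝ) (A4 : ℕ → Matrix (Fin q) (Fin q) ℝ)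
    (B1 : Matrix (Fin p) (Fin p) ℝ) (B2 : Matrix (Fin p) (Fin q) ℝ)
    (B3 : Matrix (Fin q) (Fin p) ℝ)
    (h1inv : ∀ n, IsUnit (A1 n)) (h4inv : ∀ n, IsUnit (A4 n)) (hB1 : IsUnit B1)
    (h1 : Filter.Tendsto A1 Filter.atTop (nhds B1))
    (h2 : Filter.Tendsto A2 Filter.atTop (nhds B2))
    (h3 : Filter.Tendsto A3 Filter.atTop (nhds B3))
    (h4 : Filter.Tendsto (fun n => (A4 n)⁻¹) Filter.atTop (nhds 0)) :
    Filter.Tendsto (fun n => (Matrix.fromBlocks (A1 n) (A2 n) (A3 n) (A4 n))⁻¹)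
      Filter.atTop (nhds (Matrix.fromBlocks B1⁻¹ 0 0 0)) := by
  set S : ℕ → Matrix (Fin p) (Fin p) ℝ := fun n => A1 n - A2 n * (A4 n)⁻¹ * A3 n with hSdef
  -- the Schur complement tends to B1
  have hS : Tendsto S atTop (nhds B1) := by
    have := h1.sub (tendsto_matrix_mul (tendsto_matrix_mul h2 h4) h3)
    simpa using this
  -- B1.det is a unit
  have hdetB1 : IsUnit B1.det := (Matrix.isUnit_iff_isUnit_det B1).mp hB1
  -- det of S tends to det B1
  have hdet : Tendsto (fun n => (S n).det) atTop (nhds B1.det) :=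
    (Continuous.matrix_det continuous_id).continuousAt.tendsto.comp hS
  -- eventually S n is a unit
  have hSunit : ∀ᶠ n in atTop, IsUnit (S n) := by
    have : ∀ᶠ n in atTop, (S n).det ≠ 0 :=
      hdet (isOpen_ne.mem_nhds hdetB1.ne_zero)
    filter_upwards [this] with n hn
    exact (Matrix.isUnit_iff_isUnit_det (S n)).mpr (isUnit_iff_ne_zero.mpr hn)
  -- inverse of S tends to B1⁻¹
  have hSinv : Tendsto (fun n => (S n)⁻¹) atTop (nhds B1⁻¹) := by
    have hcont : ContinuousAt Ring.inverse B1.det := by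
      have := NormedRing.inverse_continuousAt hdetB1.unit
      simpa [hdetB1.unit_spec] using this
    exact (continuousAt_matrix_inv B1 hcont).tendsto.comp hS
  -- the limit candidate
  have hmain : Tendsto (fun n => Matrix.fromBlocks ((S n)⁻¹)
      (-((S n)⁻¹ * A2 n * (A4 n)⁻¹)) (-((A4 n)⁻¹ * A3 n * (S n)⁻¹))
      ((A4 n)⁻¹ + (A4 n)⁻¹ * A3 n * (S n)⁻¹ * A2 n * (A4 n)⁻¹)) atTop
      (nhds (Matrix.fromBlocks B1⁻¹ 0 0 0)) := by
    have t2 : Tendsto (fun n => -((S n)⁻¹ * A2 n * (A4 n)⁻¹)) atTop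
        (nhds (0 : Matrix (Fin p) (Fin q) ℝ)) := by
      have := (tendsto_matrix_mul (tendsto_matrix_mul hSinv h2) h4).neg
      simpa using this
    have t3 : Tendsto (fun n => -((A4 n)⁻¹ * A3 n * (S n)⁻¹)) atTop
        (nhds (0 : Matrix (Fin q) (Fin p) ℝ)) := by
      have := (tendsto_matrix_mul (tendsto_matrix_mul h4 h3) hSinv).neg
      simpa using this
    have t4 : Tendsto (fun n => (A4 n)⁻¹ + (A4 n)⁻¹ * A3 n * (S n)⁻¹ * A2 n * (A4 n)⁻¹)
        atTop (nhds (0 : Matrix (Fin q) (Fin q) ℝ)) := by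
      have := h4.add (tendsto_matrix_mul
        (tendsto_matrix_mul (tendsto_matrix_mul (tendsto_matrix_mul h4 h3) hSinv) h2) h4)
      simpa using this
    exact tendsto_matrix_fromBlocks hSinv t2 t3 t4
  refine hmain.congr' ?_
  filter_upwards [hSunit] with n hn
  exact (inv_fromBlocks_of_isUnit (A1 n) (A2 n) (A3 n) (A4 n) (h4inv n) hn).symm
end

section
/- (Mirsky's inequality) Let A and B be real matrices of the same shape with singular values σ_j(A), σ_j(B) listed in decreasing order. Then √(Σ_j (σ_j(A) - σ_j(B))²) ≤ ‖A - B‖_F, where ‖·‖_F is the Frobenius norm. -/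
/-!
Write `A = ∑ⱼ σⱼ uⱼ vⱼᵀ` with `(vⱼ)` an orthonormal eigenbasis of `AᵀA` and `(uⱼ)` orthogonal of
norm at most one, and likewise `B = ∑ₖ τₖ u'ₖ v'ₖᵀ`. Then `⟨A, B⟩_F = ∑ⱼₖ σⱼ τₖ (uⱼ ⬝ u'ₖ)(vⱼ ⬝ v'ₖ)`,
and by Bessel and Cauchy–Schwarz the matrix `|uⱼ ⬝ u'ₖ| |vⱼ ⬝ v'ₖ|` is doubly substochastic.
For such a matrix `q` and decreasing nonnegative `a`, `b` one has `∑ᵢⱼ aᵢ bⱼ qᵢⱼ ≤ ∑ᵢ aᵢ bᵢ`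
(a bathtub estimate on partial sums followed by Abel summation), which gives von Neumann's
trace inequality `⟨A, B⟩_F ≤ ∑ⱼ σⱼ(A) σⱼ(B)`. Mirsky's inequality follows by expanding both
squares, since `‖A‖_F² = ∑ⱼ σⱼ(A)²`.
-/

open Finset Matrix

/-- The singular values of a real matrix `A` (square roots of the eigenvalues of
`AᴴA`), listed in decreasing order: index `0` is the largest. -/
noncomputable def svalDesc {m n : ℕ} (A : Matrix (Fin m) (Fin n) ℝ) : Fin n → ℝ :=
  fun j =>
    let s : Fin n → ℝ :=
      fun i => Real.sqrt ((Matrix.isHermitian_conjTranspose_mul_self A).eigenvalues i)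
    (s ∘ Tuple.sort s) j.rev

/-- The Frobenius norm of a real matrix. -/
noncomputable def frobNorm {m n : ℕ} (A : Matrix (Fin m) (Fin n) ℝ) : ℝ :=
  Real.sqrt (∑ i, ∑ j, (A i j) ^ 2)

theorem sum_mul_le_sum_of_threshold {ι : Type*} [Fintype ι] (s : Finset ι) {a w : ι → ℝ} {c : ℝ}
    (hc : 0 ≤ c) (ha_mem : ∀ i ∈ s, c ≤ a i) (ha_not_mem : ∀ i ∉ s, a i ≤ c)
    (hw_mem : ∀ i ∈ s, w i ≤ 1) (hw_not_mem : ∀ i ∉ s, 0 ≤ w i) (hw : ∑ i, w i ≤ #s) :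
    ∑ i, a i * w i ≤ ∑ i ∈ s, a i := by
  classical
  set e : ι → ℝ := fun i => (if i ∈ s then 1 else 0) - w i
  have hs : ∑ i ∈ s, a i = ∑ i, a i * w i + ∑ i, a i * e i := by
    simp [e, mul_sub, mul_ite, sum_ite_mem]
  have he : ∑ i, c * e i = c * (#s - ∑ i, w i) := by
    simp [e, ← mul_sum, sum_sub_distrib, sum_ite_mem]
  have hce : ∀ i, c * e i ≤ a i * e i := fun i => by
    by_cases hi : i ∈ s
    · exact mul_le_mul_of_nonneg_right (ha_mem i hi) (by simpa [e, hi] using hw_mem i hi)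
    · exact mul_le_mul_of_nonpos_right (ha_not_mem i hi) (by simpa [e, hi] using hw_not_mem i hi)
  have : 0 ≤ ∑ i, a i * e i :=
    calc 0 ≤ c * (#s - ∑ i, w i) := mul_nonneg hc (sub_nonneg.mpr hw)
      _ = ∑ i, c * e i := he.symm
      _ ≤ ∑ i, a i * e i := sum_le_sum fun i _ => hce i
  linarith

theorem sum_mul_nonneg_of_antitone {ι : Type*} [LinearOrder ι] (s : Finset ι) {b d : ι → ℝ}
    (hb : Antitone b) (hb0 : ∀ i ∈ s, 0 ≤ b i) (hd : ∀ k ∈ s, 0 ≤ ∑ j ∈ s with j ≤ k, d j) :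
    0 ≤ ∑ j ∈ s, b j * d j := by
  induction s using Finset.induction_on_max generalizing b with
  | empty => simp
  | insert a s ha ih =>
    have ha_not_mem : a ∉ s := fun h => lt_irrefl a (ha a h)
    have hd_s : ∀ k ∈ s, 0 ≤ ∑ j ∈ s with j ≤ k, d j := fun k hk => by
      have : (insert a s).filter (· ≤ k) = s.filter (· ≤ k) := by
        rw [filter_insert, if_neg (not_le.mpr (ha k hk))]
      simpa [this] using hd k (mem_insert_of_mem hk)
    have htotal : 0 ≤ ∑ j ∈ insert a s, d j := by
      have : (insert a s).filter (· ≤ a) = insert a s :=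
        filter_true_of_mem fun j hj => by
          rcases mem_insert.mp hj with rfl | hj
          exacts [le_rfl, (ha j hj).le]
      simpa [this] using hd a (mem_insert_self a s)
    have hshift : 0 ≤ ∑ j ∈ s, (b j - b a) * d j :=
      ih (fun i j hij => sub_le_sub_right (hb hij) _)
        (fun i hi => sub_nonneg.mpr (hb (ha i hi).le)) hd_s
    have hsplit : ∑ j ∈ insert a s, b j * d j
        = b a * ∑ j ∈ insert a s, d j + ∑ j ∈ s, (b j - b a) * d j := by
      simp only [sum_insert ha_not_mem, mul_add, sub_mul, sum_sub_distrib, mul_sum]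
      ring
    rw [hsplit]
    exact add_nonneg (mul_nonneg (hb0 a (mem_insert_self a s)) htotal) hshift

structure IsDoublySubstochastic {ι : Type*} [Fintype ι] (q : ι → ι → ℝ) : Prop where
  nonneg : ∀ i j, 0 ≤ q i j
  sum_row_le_one : ∀ i, ∑ j, q i j ≤ 1
  sum_col_le_one : ∀ j, ∑ i, q i j ≤ 1

namespace IsDoublySubstochastic

variable {ι : Type*} [Fintype ι] {q : ι → ι → ℝ}

theorem submatrix (hq : IsDoublySubstochastic q) (σ τ : ι ≃ ι) :
    IsDoublySubstochastic fun i j => q (σ i) (τ j) where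
  nonneg _ _ := hq.nonneg _ _
  sum_row_le_one i := (Equiv.sum_comp τ (q (σ i))).trans_le (hq.sum_row_le_one _)
  sum_col_le_one j := (Equiv.sum_comp σ (q · (τ j))).trans_le (hq.sum_col_le_one _)

theorem sum_sum_mul_le [LinearOrder ι] (hq : IsDoublySubstochastic q) {a b : ι → ℝ}
    (ha : Antitone a) (hb : Antitone b) (ha0 : ∀ i, 0 ≤ a i) (hb0 : ∀ i, 0 ≤ b i) :
    ∑ i, ∑ j, a i * b j * q i j ≤ ∑ i, a i * b i := by
  have hpartial : ∀ k, ∑ j with j ≤ k, ∑ i, a i * q i j ≤ ∑ j with j ≤ k, a j := fun k => by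
    rw [sum_comm]
    simp_rw [← mul_sum]
    refine sum_mul_le_sum_of_threshold _ (ha0 k) (fun i hi => ha (mem_filter.mp hi).2)
      (fun i hi => ha (not_le.mp (by simpa using hi)).le)
      (fun i _ => (sum_le_sum_of_subset_of_nonneg (filter_subset _ _)
        fun j _ _ => hq.nonneg i j).trans (hq.sum_row_le_one i))
      (fun i _ => sum_nonneg fun j _ => hq.nonneg i j) ?_
    rw [sum_comm, card_eq_sum_ones, Nat.cast_sum, Nat.cast_one]
    exact sum_le_sum fun j _ => hq.sum_col_le_one j
  have key := sum_mul_nonneg_of_antitone univ hb (fun i _ => hb0 i)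
    (d := fun j => a j - ∑ i, a i * q i j) fun k _ => by
      simpa [sum_sub_distrib] using hpartial k
  have hlhs : ∑ i, ∑ j, a i * b j * q i j = ∑ j, b j * ∑ i, a i * q i j := by
    rw [sum_comm]
    simp_rw [mul_sum]
    exact sum_congr rfl fun j _ => sum_congr rfl fun i _ => by ring
  simp only [mul_sub, sum_sub_distrib, sub_nonneg] at key
  rw [hlhs]
  simpa [mul_comm] using key

end IsDoublySubstochastic

structure IsSubOrthonormal {J κ : Type*} [Fintype κ] (u : J → κ → ℝ) : Prop where
  pairwise_dotProduct_eq_zero : Pairwise fun i j => u i ⬝ᵥ u j = 0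
  dotProduct_self_le_one : ∀ j, u j ⬝ᵥ u j ≤ 1

namespace IsSubOrthonormal

variable {J κ : Type*} [Fintype J] [Fintype κ] {p : J → κ → ℝ}

theorem sum_sq_dotProduct_le (hp : IsSubOrthonormal p) (x : κ → ℝ) :
    ∑ j, (x ⬝ᵥ p j) ^ 2 ≤ x ⬝ᵥ x := by
  set c : J → ℝ := fun j => x ⬝ᵥ p j
  set y : κ → ℝ := ∑ j, c j • p j
  have hxy : x ⬝ᵥ y = ∑ j, c j ^ 2 := by
    simp [y, dotProduct_sum, c, sq]
  have hyy : y ⬝ᵥ y ≤ ∑ j, c j ^ 2 := by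
    have hdiag : ∀ i, (c i • p i) ⬝ᵥ y = c i ^ 2 * (p i ⬝ᵥ p i) := fun i => by
      rw [dotProduct_sum, sum_eq_single i (fun j _ hji => by
        simp [hp.pairwise_dotProduct_eq_zero hji.symm]) (by simp)]
      simp only [smul_dotProduct, dotProduct_smul, smul_eq_mul]
      ring
    rw [sum_dotProduct]
    simp_rw [hdiag]
    exact sum_le_sum fun j _ =>
      mul_le_of_le_one_right (sq_nonneg _) (hp.dotProduct_self_le_one j)
  have : 0 ≤ (x - y) ⬝ᵥ (x - y) := dotProduct_self_star_nonneg _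
  simp only [sub_dotProduct, dotProduct_sub, dotProduct_comm y x, hxy] at this
  linarith

theorem sum_abs_dotProduct_mul_abs_dotProduct_le_one {κ' : Type*} [Fintype κ']
    {r : J → κ' → ℝ} (hp : IsSubOrthonormal p) (hr : IsSubOrthonormal r) {x : κ → ℝ}
    {y : κ' → ℝ} (hx : x ⬝ᵥ x ≤ 1) (hy : y ⬝ᵥ y ≤ 1) :
    ∑ j, |x ⬝ᵥ p j| * |y ⬝ᵥ r j| ≤ 1 :=
  calc ∑ j, |x ⬝ᵥ p j| * |y ⬝ᵥ r j|
      ≤ √(∑ j, (x ⬝ᵥ p j) ^ 2) * √(∑ j, (y ⬝ᵥ r j) ^ 2) := by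
        simpa only [sq_abs] using Real.sum_mul_le_sqrt_mul_sqrt univ
          (fun j => |x ⬝ᵥ p j|) (fun j => |y ⬝ᵥ r j|)
    _ ≤ √1 * √1 := by
        gcongr
        exacts [(hp.sum_sq_dotProduct_le x).trans hx, (hr.sum_sq_dotProduct_le y).trans hy]
    _ = 1 := by simp

theorem isDoublySubstochastic {κ' : Type*} [Fintype κ'] {u u' : J → κ → ℝ} {v v' : J → κ' → ℝ} (hu : IsSubOrthonormal u)
    (hu' : IsSubOrthonormal u') (hv : IsSubOrthonormal v) (hv' : IsSubOrthonormal v') :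
    IsDoublySubstochastic fun j j' => |u j ⬝ᵥ u' j'| * |v j ⬝ᵥ v' j'| where
  nonneg _ _ := by positivity
  sum_row_le_one j := hu'.sum_abs_dotProduct_mul_abs_dotProduct_le_one hv'
    (hu.dotProduct_self_le_one j) (hv.dotProduct_self_le_one j)
  sum_col_le_one j' := by
    simp_rw [dotProduct_comm (u _), dotProduct_comm (v _)]
    exact hu.sum_abs_dotProduct_mul_abs_dotProduct_le_one hv
      (hu'.dotProduct_self_le_one j') (hv'.dotProduct_self_le_one j')

end IsSubOrthonormal

section SingularValueDecomposition

variable {m n : Type*} [Fintype m] [Fintype n] [DecidableEq n] (A : Matrix m n ℝ)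

noncomputable def sval (j : n) : ℝ :=
  √((isHermitian_conjTranspose_mul_self A).eigenvalues j)

noncomputable def rightSingularVec (j : n) : n → ℝ :=
  (isHermitian_conjTranspose_mul_self A).eigenvectorBasis j

/-- Since `0⁻¹ = 0`, this is the zero vector when `sval A j = 0`. -/
noncomputable def leftSingularVec (j : n) : m → ℝ :=
  (sval A j)⁻¹ • (A *ᵥ rightSingularVec A j)

theorem sval_nonneg (j : n) : 0 ≤ sval A j := Real.sqrt_nonneg _

theorem sval_sq (j : n) :
    sval A j ^ 2 = (isHermitian_conjTranspose_mul_self A).eigenvalues j :=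
  Real.sq_sqrt (eigenvalues_conjTranspose_mul_self_nonneg A j)

theorem rightSingularVec_dotProduct (i j : n) :
    rightSingularVec A i ⬝ᵥ rightSingularVec A j = if i = j then 1 else 0 := by
  have := orthonormal_iff_ite.mp
    (isHermitian_conjTranspose_mul_self A).eigenvectorBasis.orthonormal i j
  simpa [rightSingularVec, EuclideanSpace.inner_eq_star_dotProduct, dotProduct_comm] using this

theorem sum_rightSingularVec_mul_rightSingularVec (k k' : n) :
    ∑ j, rightSingularVec A j k * rightSingularVec A j k' = if k = k' then 1 else 0 := by
  have h := congr_fun₂ (mem_unitaryGroup_iff.mp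
    (isHermitian_conjTranspose_mul_self A).eigenvectorUnitary.2) k k'
  simpa [rightSingularVec, mul_apply, IsHermitian.eigenvectorUnitary_apply, one_apply] using h

theorem isSubOrthonormal_rightSingularVec : IsSubOrthonormal (rightSingularVec A) where
  pairwise_dotProduct_eq_zero i j hij := by simp [rightSingularVec_dotProduct, hij]
  dotProduct_self_le_one j := by simp [rightSingularVec_dotProduct]

theorem mulVec_rightSingularVec_dotProduct (i j : n) :
    (A *ᵥ rightSingularVec A i) ⬝ᵥ (A *ᵥ rightSingularVec A j)
      = if i = j then sval A j ^ 2 else 0 := by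
  have heig : (Aᴴ * A) *ᵥ rightSingularVec A j
      = (isHermitian_conjTranspose_mul_self A).eigenvalues j • rightSingularVec A j :=
    (isHermitian_conjTranspose_mul_self A).mulVec_eigenvectorBasis j
  rw [dotProduct_mulVec, ← vecMul_transpose, vecMul_vecMul, ← dotProduct_mulVec,
    ← conjTranspose_eq_transpose_of_trivial, heig, dotProduct_smul,
    rightSingularVec_dotProduct, sval_sq]
  split_ifs <;> simp

theorem sval_smul_leftSingularVec (j : n) :
    sval A j • leftSingularVec A j = A *ᵥ rightSingularVec A j := by
  by_cases hj : sval A j = 0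
  · have : (A *ᵥ rightSingularVec A j) ⬝ᵥ (A *ᵥ rightSingularVec A j) = 0 := by
      simp [mulVec_rightSingularVec_dotProduct, hj]
    rw [hj, zero_smul, dotProduct_self_eq_zero.mp this]
  · rw [leftSingularVec, smul_smul, mul_inv_cancel₀ hj, one_smul]

theorem isSubOrthonormal_leftSingularVec : IsSubOrthonormal (leftSingularVec A) where
  pairwise_dotProduct_eq_zero i j hij := by
    simp [leftSingularVec, mulVec_rightSingularVec_dotProduct, hij]
  dotProduct_self_le_one j := by
    simp only [leftSingularVec, smul_dotProduct, dotProduct_smul,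
      mulVec_rightSingularVec_dotProduct, if_pos, smul_eq_mul]
    by_cases hj : sval A j = 0
    · simp [hj]
    · exact (by field_simp : (sval A j)⁻¹ * ((sval A j)⁻¹ * sval A j ^ 2) = 1).le

theorem apply_eq_sum_sval_mul (i : m) (k : n) :
    A i k = ∑ j, sval A j * leftSingularVec A j i * rightSingularVec A j k := by
  have hAv : ∀ j, sval A j * leftSingularVec A j i = (A *ᵥ rightSingularVec A j) i :=
    fun j => congr_fun (sval_smul_leftSingularVec A j) i
  simp_rw [hAv, mulVec, dotProduct, sum_mul, mul_assoc]
  rw [sum_comm]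
  simp_rw [← mul_sum, sum_rightSingularVec_mul_rightSingularVec]
  simp

theorem sum_sum_sq_eq_sum_sval_sq : ∑ i, ∑ k, A i k ^ 2 = ∑ j, sval A j ^ 2 := by
  have h := (isHermitian_conjTranspose_mul_self A).trace_eq_sum_eigenvalues
  simp only [trace, Matrix.diag, mul_apply, conjTranspose_apply, star_trivial,
    RCLike.ofReal_real_eq_id, id] at h
  simp_rw [sval_sq, ← h, sq]
  exact sum_comm

end SingularValueDecomposition

theorem sum_sum_mul_eq_of_expansion {ι κ J : Type*} [Fintype ι] [Fintype κ] [Fintype J]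
    {A B : ι → κ → ℝ} {s t : J → ℝ} {u u' : J → ι → ℝ} {v v' : J → κ → ℝ}
    (hA : ∀ i k, A i k = ∑ j, s j * u j i * v j k)
    (hB : ∀ i k, B i k = ∑ j, t j * u' j i * v' j k) :
    ∑ i, ∑ k, A i k * B i k
      = ∑ j, ∑ j', s j * t j' * ((u j ⬝ᵥ u' j') * (v j ⬝ᵥ v' j')) := by
  simp only [hA, hB, sum_mul_sum]
  rw [sum_comm_cycle]
  refine sum_congr rfl fun j _ => ?_
  rw [sum_comm_cycle]
  refine sum_congr rfl fun j' _ => ?_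
  rw [dotProduct, dotProduct, sum_mul_sum, mul_sum]
  simp only [mul_sum]
  exact sum_congr rfl fun i _ => sum_congr rfl fun k _ => by ring

section SortedSingularValues

variable {m n : ℕ} (A : Matrix (Fin m) (Fin n) ℝ)

noncomputable def svalPerm : Equiv.Perm (Fin n) := Fin.revPerm.trans (Tuple.sort (sval A))

theorem svalDesc_eq_sval_svalPerm (j : Fin n) : svalDesc A j = sval A (svalPerm A j) := rfl

theorem svalDesc_antitone : Antitone (svalDesc A) :=
  fun _ _ hij => Tuple.monotone_sort (sval A) (Fin.rev_le_rev.mpr hij)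

theorem svalDesc_nonneg (j : Fin n) : 0 ≤ svalDesc A j := sval_nonneg A _

theorem sum_svalDesc_sq : ∑ j, svalDesc A j ^ 2 = ∑ i, ∑ k, A i k ^ 2 := by
  simp only [svalDesc_eq_sval_svalPerm, sum_sum_sq_eq_sum_sval_sq]
  exact Equiv.sum_comp (svalPerm A) (sval A · ^ 2)

end SortedSingularValues

theorem sum_sum_mul_le_sum_svalDesc_mul {m n : ℕ} (A B : Matrix (Fin m) (Fin n) ℝ) :
    ∑ i, ∑ k, A i k * B i k ≤ ∑ j, svalDesc A j * svalDesc B j := by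
  set Q : Fin n → Fin n → ℝ := fun j j' =>
    |leftSingularVec A j ⬝ᵥ leftSingularVec B j'| *
      |rightSingularVec A j ⬝ᵥ rightSingularVec B j'|
  have hQ : IsDoublySubstochastic Q :=
    (isSubOrthonormal_leftSingularVec A).isDoublySubstochastic
      (isSubOrthonormal_leftSingularVec B) (isSubOrthonormal_rightSingularVec A)
      (isSubOrthonormal_rightSingularVec B)
  calc ∑ i, ∑ k, A i k * B i k
      = ∑ j, ∑ j', sval A j * sval B j' *
          ((leftSingularVec A j ⬝ᵥ leftSingularVec B j') *
            (rightSingularVec A j ⬝ᵥ rightSingularVec B j')) :=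
        sum_sum_mul_eq_of_expansion (apply_eq_sum_sval_mul A) (apply_eq_sum_sval_mul B)
    _ ≤ ∑ j, ∑ j', sval A j * sval B j' * Q j j' := by
        refine sum_le_sum fun j _ => sum_le_sum fun j' _ => ?_
        exact mul_le_mul_of_nonneg_left ((le_abs_self _).trans_eq (abs_mul _ _))
          (mul_nonneg (sval_nonneg A j) (sval_nonneg B j'))
    _ = ∑ j, ∑ j', svalDesc A j * svalDesc B j' * Q (svalPerm A j) (svalPerm B j') := by
        simp only [svalDesc_eq_sval_svalPerm]
        rw [← Equiv.sum_comp (svalPerm A)]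
        exact sum_congr rfl fun j _ => (Equiv.sum_comp (svalPerm B) _).symm
    _ ≤ ∑ j, svalDesc A j * svalDesc B j :=
        (hQ.submatrix _ _).sum_sum_mul_le (svalDesc_antitone A) (svalDesc_antitone B)
          (svalDesc_nonneg A) (svalDesc_nonneg B)

/-- Mirsky: `√(Σ_j (σ_j(A) - σ_j(B))²) ≤ ‖A - B‖_F`. -/
theorem stmt7 (m n : ℕ) (A B : Matrix (Fin m) (Fin n) ℝ) :
    Real.sqrt (∑ j, (svalDesc A j - svalDesc B j) ^ 2) ≤ frobNorm (A - B) := by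
  refine Real.sqrt_le_sqrt ?_
  have hvonNeumann := sum_sum_mul_le_sum_svalDesc_mul A B
  have hA := sum_svalDesc_sq A
  have hB := sum_svalDesc_sq B
  simp only [Matrix.sub_apply, sub_sq, sum_add_distrib, sum_sub_distrib, mul_assoc,
    ← mul_sum] at hvonNeumann hA hB ⊢
  linarith
end

section
/- Let H = X(Xᵀ D X + G)⁻¹Xᵀ where X ∈ ℝ^{n×p}, D ∈ ℝ^{n×n} diagonal positive semidefinite, and G ∈ ℝ^{p×p} symmetric positive definite. Then for each i, H_{ii} D_{ii} < 1, so in particular 1 − H_{ii}D_{ii} > 0 and the approximate-leave-one-out correction term H_{ii}/(1 − H_{ii}D_{ii}) is well-defined. -/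
/-!
Put `A = XᵀDX + G`, `x = X i`, `w = A⁻¹x` and `t = xᵀA⁻¹x = H_{ii}`. Then
`t = wᵀAw = wᵀ(XᵀDX)w + wᵀGw`, and keeping only the `i`-th term of
`wᵀ(XᵀDX)w = ∑ₖ D_k (Xw)_k²` gives `wᵀ(XᵀDX)w ≥ D_i t²`. Hence `D_i t² + wᵀGw ≤ t`;
as `wᵀGw > 0` unless `w = 0` (and then `t = 0`), this forces `D_i t < 1`.
-/

open Matrix

namespace Matrix

variable {l m n : Type*} [Fintype m] [Fintype n]

theorem mul_mul_apply_eq_dotProduct_mulVec {α : Type*} [NonUnitalSemiring α]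
    (A : Matrix l m α) (B : Matrix m n α) (C : Matrix n l α) (i j : l) :
    (A * B * C) i j = A i ⬝ᵥ B *ᵥ Cᵀ j := by
  rw [Matrix.mul_assoc]
  simp [mul_apply, dotProduct, mulVec]

theorem mul_sq_mulVec_apply_le_transpose_mul_diagonal_mul [DecidableEq m]
    {X : Matrix m n ℝ} {D : m → ℝ} (hD : ∀ k, 0 ≤ D k) (i : m) (w : n → ℝ) :
    D i * (X *ᵥ w) i ^ 2 ≤ w ⬝ᵥ (Xᵀ * diagonal D * X) *ᵥ w := by
  have hsum : w ⬝ᵥ (Xᵀ * diagonal D * X) *ᵥ w = ∑ k, D k * (X *ᵥ w) k ^ 2 := by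
    rw [← mulVec_mulVec, ← mulVec_mulVec, dotProduct_mulVec, vecMul_transpose]
    simp only [dotProduct, mulVec_diagonal]
    exact Finset.sum_congr rfl fun k _ => by ring
  rw [hsum]
  exact Finset.single_le_sum (f := fun k => D k * (X *ᵥ w) k ^ 2)
    (fun k _ => mul_nonneg (hD k) (sq_nonneg _)) (Finset.mem_univ i)

theorem mul_dotProduct_add_inv_mulVec_lt_one [DecidableEq n] {c : ℝ} (hc : 0 ≤ c) {x : n → ℝ}
    {M G : Matrix n n ℝ} (hM : ∀ w, c * (x ⬝ᵥ w) ^ 2 ≤ w ⬝ᵥ M *ᵥ w) (hG : G.PosDef) :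
    c * (x ⬝ᵥ (M + G)⁻¹ *ᵥ x) < 1 := by
  set w := (M + G)⁻¹ *ᵥ x
  rcases eq_or_ne w 0 with hw | hw
  · simp [hw]
  have hunit : IsUnit (M + G).det := by
    by_contra h
    exact hw (by simp [w, nonsing_inv_apply_not_isUnit _ h])
  have hx : (M + G) *ᵥ w = x := by
    rw [mulVec_mulVec, mul_nonsing_inv _ hunit, one_mulVec]
  have hsplit : w ⬝ᵥ M *ᵥ w + w ⬝ᵥ G *ᵥ w = x ⬝ᵥ w := by
    rw [← dotProduct_add, ← add_mulVec, hx, dotProduct_comm]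
  have hGw : 0 < w ⬝ᵥ G *ᵥ w := by simpa using hG.dotProduct_mulVec_pos hw
  have hlt : c * (x ⬝ᵥ w) ^ 2 < x ⬝ᵥ w := by linarith [hM w]
  have hpos : 0 < x ⬝ᵥ w := by nlinarith [sq_nonneg (x ⬝ᵥ w)]
  nlinarith

end Matrix

/-- for `H = X(XᵀDX + G)⁻¹Xᵀ` with `D` diagonal PSD and `G ≻ 0`,
every diagonal entry satisfies `H_{ii} D_{ii} < 1`, so the ALO correction factor
`H_{ii}/(1 - H_{ii}D_{ii})` is well-defined. -/
theorem stmt15 (n p : ℕ) (X : Matrix (Fin n) (Fin p) ℝ) (D : Fin n → ℝ)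
    (hD : ∀ i, 0 ≤ D i) (G : Matrix (Fin p) (Fin p) ℝ) (hG : G.PosDef) (i : Fin n) :
    (X * (Xᵀ * Matrix.diagonal D * X + G)⁻¹ * Xᵀ) i i * D i < 1 := by
  rw [mul_mul_apply_eq_dotProduct_mulVec, transpose_transpose, mul_comm]
  exact mul_dotProduct_add_inv_mulVec_lt_one (hD i)
    (mul_sq_mulVec_apply_le_transpose_mul_diagonal_mul hD i) hG
end
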